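/- arXiv:2001.03776 — 8 statements merged into one kernel-verified Lean document; each statement's English description precedes it below -/
import Mathlib

section
/- Let f : ℝ² → ℝ be a differentiable function satisfying ∂f/∂x + f·∂f/∂y = 0 everywhere. Then f is constant. -/
open Set Filter intervalIntegral MeasureTheory Metric Real Topology

namespace Stmt0Aux

noncomputable def cl (x : ℝ) : ℝ := max (-1) (min 1 x)

lemma cl_mem (x : ℝ) : cl x ∈ Icc (-1:ℝ) 1 := by
  constructor
  · exact le_max_left _ _
  · simp only [cl, max_le_iff]
    constructor
    · norm_num
    · exact min_le_left _ _

lemma cl_eq {x : ℝ} (hx : x ∈ Icc (-1:ℝ) 1) : cl x = x := by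
  simp only [cl, min_eq_right hx.2, max_eq_right hx.1]

lemma cl_lip (x y : ℝ) : |cl x - cl y| ≤ |x - y| := by
  have h1 : |min 1 x - min 1 y| ≤ |x - y| := by
    simpa [min_comm] using abs_min_sub_min_le_max x 1 y 1
  calc |cl x - cl y| ≤ |min 1 x - min 1 y| := by
        simpa [cl, max_comm] using abs_max_sub_max_le_abs (min 1 x) (min 1 y) (-1)
    _ ≤ |x - y| := h1

section Approx

variable (G : ℝ → ℝ → ℝ) (c : ℝ)

/-- inf-convolution in the second variable -/
noncomputable def FnC (t x : ℝ) : ℝ := ⨅ x' : ℝ, (G t x' + c * |x - x'|)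

variable {G c}
variable {B : ℝ} (hB : ∀ t x, |G t x| ≤ B) (hc : 0 ≤ c)

include hB hc in
lemma FnC_bdd (t x : ℝ) : BddBelow (range fun x' => G t x' + c * |x - x'|) := by
  refine ⟨-B, ?_⟩
  rintro z ⟨x', rfl⟩
  dsimp only
  have h1 := (abs_le.mp (hB t x')).1
  nlinarith [abs_nonneg (x - x')]

include hB hc in
lemma FnC_le (t x x' : ℝ) : FnC G c t x ≤ G t x' + c * |x - x'| :=
  ciInf_le (FnC_bdd hB hc t x) x'

include hB hc in
lemma FnC_le_G (t x : ℝ) : FnC G c t x ≤ G t x := by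
  simpa using FnC_le hB hc t x x

include hB hc in
lemma le_FnC (t x : ℝ) : -B ≤ FnC G c t x := by
  refine le_ciInf fun x' => ?_
  have h1 := (abs_le.mp (hB t x')).1
  nlinarith [abs_nonneg (x - x')]

include hB hc in
lemma abs_FnC_le (t x : ℝ) : |FnC G c t x| ≤ B := by
  rw [abs_le]
  refine ⟨le_FnC hB hc t x, (FnC_le_G hB hc t x).trans ?_⟩
  exact (le_abs_self _).trans (hB t x)

include hB hc in
lemma FnC_lip (t x y : ℝ) : |FnC G c t x - FnC G c t y| ≤ c * |x - y| := by
  have key : ∀ u v : ℝ, FnC G c t u - c * |u - v| ≤ FnC G c t v := by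
    intro u v
    refine le_ciInf fun x' => ?_
    have h := FnC_le hB hc t u x'
    have h2 : |u - x'| ≤ |v - x'| + |u - v| := by
      calc |u - x'| ≤ |u - v| + |v - x'| := abs_sub_le _ _ _
        _ = |v - x'| + |u - v| := by ring
    have h3 := mul_le_mul_of_nonneg_left h2 hc
    linarith
  rw [abs_sub_le_iff]
  constructor
  · have := key x y
    linarith
  · have := key y x
    rw [abs_sub_comm] at this
    linarith

include hB in
lemma FnC_mono {c' : ℝ} (hc : 0 ≤ c) (hcc : c ≤ c') (t x : ℝ) :
    FnC G c t x ≤ FnC G c' t x := by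
  refine le_ciInf fun x' => ?_
  calc FnC G c t x ≤ G t x' + c * |x - x'| := FnC_le hB hc t x x'
    _ ≤ G t x' + c' * |x - x'| := by gcongr

include hB hc in
lemma FnC_t_le {s t : ℝ} {ε : ℝ} (h : ∀ x', G t x' ≤ G s x' + ε) (x : ℝ) :
    FnC G c t x ≤ FnC G c s x + ε := by
  rw [← sub_le_iff_le_add]
  refine (le_ciInf fun x' => ?_ : FnC G c t x - ε ≤ FnC G c s x)
  have h1 := FnC_le hB hc (G := G) (c := c) t x x'
  have h2 := h x'
  linarith


variable (hGu : ∀ ε > (0:ℝ), ∃ δ > (0:ℝ), ∀ t x s y : ℝ, |t - s| ≤ δ → |x - y| ≤ δ → |G t x - G s y| ≤ ε)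

include hB hc hGu in
lemma FnC_cont :
    Continuous fun p : ℝ × ℝ => FnC G c p.1 p.2 := by
  rw [Metric.continuous_iff]
  rintro ⟨t, x⟩ ε hε
  obtain ⟨δ₁, hδ₁, hδ⟩ := hGu (ε/4) (by positivity)
  refine ⟨min δ₁ (ε / (4 * (c+1))), by positivity, ?_⟩
  rintro ⟨s, z⟩ hdist
  rw [Prod.dist_eq] at hdist
  have hd1 : dist s t ≤ min δ₁ (ε / (4 * (c+1))) := ((le_max_left _ _).trans_lt hdist).le
  have hd2 : dist z x ≤ min δ₁ (ε / (4 * (c+1))) := ((le_max_right _ _).trans_lt hdist).le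
  have hts : |s - t| ≤ δ₁ := by
    rw [Real.dist_eq] at hd1; exact hd1.trans (min_le_left _ _)
  have hzx : |z - x| ≤ ε / (4 * (c+1)) := by
    rw [Real.dist_eq] at hd2; exact hd2.trans (min_le_right _ _)
  -- |FnC G c s z - FnC G c t x| ≤ |FnC s z - FnC s x| + |FnC s x - FnC t x|
  have h1 : |FnC G c s z - FnC G c s x| ≤ c * |z - x| := FnC_lip hB hc s z x
  have h2 : |FnC G c s x - FnC G c t x| ≤ ε/4 := by
    rw [abs_sub_le_iff]
    constructor
    · have h := FnC_t_le hB hc (s := t) (t := s) (ε := ε/4)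
        (fun x' => by have := hδ s x' t x' hts (by simpa using hδ₁.le); rw [abs_sub_le_iff] at this; linarith [this.1]) x
      have h' : FnC G c s x ≤ FnC G c t x + ε/4 := h
      linarith
    · have h := FnC_t_le hB hc (s := s) (t := t) (ε := ε/4)
        (fun x' => by have := hδ s x' t x' hts (by simpa using hδ₁.le); rw [abs_sub_le_iff] at this; linarith [this.2]) x
      have h' : FnC G c t x ≤ FnC G c s x + ε/4 := h
      linarith
  have hcz : c * |z - x| ≤ ε/4 := by
    have : c * |z - x| ≤ c * (ε / (4 * (c+1))) := by gcongr
    have h3 : c * (ε / (4*(c+1))) ≤ ε/4 := by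
      rw [mul_div_assoc', div_le_div_iff₀ (by positivity) (by norm_num)]
      nlinarith
    linarith
  calc dist (FnC G c s z) (FnC G c t x) = |FnC G c s z - FnC G c t x| := Real.dist_eq _ _
    _ ≤ |FnC G c s z - FnC G c s x| + |FnC G c s x - FnC G c t x| := abs_sub_le _ _ _
    _ ≤ ε/4 + ε/4 := by linarith
    _ < ε := by linarith



include hB hGu in
lemma FnC_lower :
    ∀ ε > (0:ℝ), ∃ N : ℝ, ∀ c : ℝ, N ≤ c → 0 ≤ c → ∀ t x, G t x - ε ≤ FnC G c t x := by
  intro ε hε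
  obtain ⟨δ, hδpos, hδ⟩ := hGu ε hε
  refine ⟨2 * B / δ, fun c hNc hc t x => ?_⟩
  have hB0 : 0 ≤ B := (abs_nonneg _).trans (hB 0 0)
  refine le_ciInf fun x' => ?_
  rcases le_or_gt |x - x'| δ with hle | hgt
  · have h := hδ t x t x' (by simpa using hδpos.le) hle
    rw [abs_sub_le_iff] at h
    nlinarith [abs_nonneg (x - x'), h.1]
  · have h1 : -B ≤ G t x' := (abs_le.mp (hB t x')).1
    have h2 : G t x ≤ B := (le_abs_self _).trans (hB t x)
    have h3 : 2 * B ≤ c * δ := by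
      rw [div_le_iff₀ hδpos] at hNc
      linarith
    have h4 : c * δ ≤ c * |x - x'| := by gcongr
    linarith


end Approx

lemma compare_sol {G : ℝ → ℝ → ℝ} {B a c c' : ℝ} (hB : ∀ t x, |G t x| ≤ B)
    (hc : 0 ≤ c) (hcc : c ≤ c') (ha : 0 < a) {u v : ℝ → ℝ}
    (huv0 : u 0 ≤ v 0)
    (hud : ∀ t ∈ Icc (0:ℝ) a, HasDerivWithinAt u (FnC G c t (u t)) (Icc (0:ℝ) a) t)
    (hvd : ∀ t ∈ Icc (0:ℝ) a, HasDerivWithinAt v (FnC G c' t (v t)) (Icc (0:ℝ) a) t) :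
    ∀ t ∈ Icc (0:ℝ) a, u t ≤ v t := by
  have hc' : 0 ≤ c' := hc.trans hcc
  set w : ℝ → ℝ := fun t => u t - v t with hwdef
  set d : ℝ → ℝ := fun t => FnC G c t (u t) - FnC G c' t (v t) with hddef
  have hwd : ∀ t ∈ Icc (0:ℝ) a, HasDerivWithinAt w (d t) (Icc (0:ℝ) a) t :=
    fun t ht => (hud t ht).sub (hvd t ht)
  have hwc : ContinuousOn w (Icc 0 a) := fun t ht => (hwd t ht).continuousWithinAt
  set g : ℝ → ℝ := fun t => max (w t) 0 with hgdef
  have key : ∀ t ∈ Icc (0:ℝ) a, g t ≤ gronwallBound 0 c' 0 (t - 0) := by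
    refine le_gronwallBound_of_liminf_deriv_right_le (f' := fun t => if 0 < w t then d t else 0)
      (fun x hx => (hwc x hx).max continuousWithinAt_const) ?_ (by simp [hgdef, hwdef, huv0]) ?_
    · -- slope condition
      intro x hx r hr
      have hxa : x < a := hx.2
      have hx' : x ∈ Icc (0:ℝ) a := ⟨hx.1, hxa.le⟩
      have hsub : Ioc x a ⊆ Icc 0 a := fun z hz => ⟨hx.1.trans hz.1.le, hz.2⟩
      have hIoc : HasDerivWithinAt w (d x) (Ioc x a) x := (hwd x hx').mono hsub
      have hslope : Tendsto (slope w x) (𝓝[>] x) (𝓝 (d x)) := by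
        have h1 := hasDerivWithinAt_iff_tendsto_slope.mp hIoc
        rwa [Set.diff_singleton_eq_self (fun h => (lt_irrefl x h.1)),
          nhdsWithin_Ioc_eq_nhdsGT hxa] at h1
      have hwcx : Tendsto w (𝓝[>] x) (𝓝 (w x)) := by
        have h1 : ContinuousWithinAt w (Ioc x a) x := (hwc x hx').mono hsub
        rwa [ContinuousWithinAt, nhdsWithin_Ioc_eq_nhdsGT hxa] at h1
      have hslope_eq : ∀ z, x < z → slope w x z = (z - x)⁻¹ * (w z - w x) := by
        intro z hz
        rw [slope_def_field, div_eq_inv_mul]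
      by_cases hpos : 0 < w x
      · have hr' : d x < r := by rwa [if_pos hpos] at hr
        have hev1 : ∀ᶠ z in 𝓝[>] x, 0 < w z := hwcx (Ioi_mem_nhds hpos)
        have hev2 : ∀ᶠ z in 𝓝[>] x, slope w x z < r := hslope (Iio_mem_nhds hr')
        refine ((hev1.and (hev2.and self_mem_nhdsWithin)).mono ?_).frequently
        rintro z ⟨h1, h2, hz⟩
        have : g z = w z := max_eq_left h1.le
        have hgx : g x = w x := max_eq_left hpos.le
        rw [this, hgx, ← hslope_eq z hz]
        exact h2
      · have hr0 : 0 < r := by rwa [if_neg hpos] at hr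
        by_cases hneg : w x < 0
        · have hev1 : ∀ᶠ z in 𝓝[>] x, w z < 0 := hwcx (Iio_mem_nhds hneg)
          refine ((hev1.and self_mem_nhdsWithin).mono ?_).frequently
          rintro z ⟨h1, hz⟩
          have h2 : g z = 0 := max_eq_right h1.le
          have h3 : g x = 0 := max_eq_right hneg.le
          rw [h2, h3]
          simpa using hr0
        · have hwx : w x = 0 := le_antisymm (not_lt.mp hpos) (not_lt.mp hneg)
          have huvx : u x = v x := by
            have := sub_eq_zero.mp hwx
            exact this
          have hdx : d x ≤ 0 := by
            rw [hddef]
            dsimp only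
            rw [huvx]
            have := FnC_mono hB hc hcc x (v x)
            linarith
          have hev2 : ∀ᶠ z in 𝓝[>] x, slope w x z < r :=
            hslope (Iio_mem_nhds (lt_of_le_of_lt hdx hr0))
          refine ((hev2.and self_mem_nhdsWithin).mono ?_).frequently
          rintro z ⟨h2, hz⟩
          have hgx : g x = 0 := by rw [hgdef]; simp [hwx]
          rw [hgx]
          by_cases hwz : 0 < w z
          · have : g z = w z := max_eq_left hwz.le
            rw [this]
            have := hslope_eq z hz
            rw [this, hwx, sub_zero] at h2
            simpa using h2
          · have : g z = 0 := max_eq_right (not_lt.mp hwz)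
            rw [this]
            simpa using hr0
    · -- bound
      intro x hx
      have hx' : x ∈ Icc (0:ℝ) a := ⟨hx.1, hx.2.le⟩
      by_cases hpos : 0 < w x
      · rw [if_pos hpos]
        have h1 : FnC G c x (u x) ≤ FnC G c' x (u x) := FnC_mono hB hc hcc x (u x)
        have h2 : |FnC G c' x (u x) - FnC G c' x (v x)| ≤ c' * |u x - v x| :=
          FnC_lip hB hc' x (u x) (v x)
        rw [abs_le] at h2
        have h3 : |u x - v x| = w x := abs_of_pos hpos
        have h4 : g x = w x := max_eq_left hpos.le
        rw [hddef]
        dsimp only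
        rw [h4]
        rw [h3] at h2
        linarith [h2.2]
      · rw [if_neg hpos]
        have : 0 ≤ g x := le_max_right _ _
        nlinarith
  intro t ht
  have := key t ht
  rw [gronwallBound_ε0_δ0] at this
  have hg : g t ≤ 0 := this
  have : w t ≤ 0 := le_trans (le_max_left _ _) hg
  rw [hwdef] at this
  dsimp only at this
  linarith


lemma eq_integral_of_deriv {a : ℝ} {y g : ℝ → ℝ}
    (hyd : ∀ t ∈ Icc (0:ℝ) a, HasDerivWithinAt y (g t) (Icc (0:ℝ) a) t)
    (hg : ContinuousOn g (Icc (0:ℝ) a)) :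
    ∀ t ∈ Icc (0:ℝ) a, y t = y 0 + ∫ s in (0:ℝ)..t, g s := by
  intro t ht
  have hyc : ContinuousOn y (Icc 0 a) := fun s hs => (hyd s hs).continuousWithinAt
  have hsub : Icc (0:ℝ) t ⊆ Icc 0 a := Icc_subset_Icc le_rfl ht.2
  have hderiv : ∀ x ∈ Ioo (0:ℝ) t, HasDerivAt y (g x) x := by
    intro x hx
    have hmem : x ∈ Icc (0:ℝ) a := ⟨hx.1.le, (hx.2.le.trans ht.2)⟩
    exact (hyd x hmem).hasDerivAt (Icc_mem_nhds hx.1 (lt_of_lt_of_le hx.2 ht.2))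
  have hint : IntervalIntegrable g volume 0 t := by
    apply ContinuousOn.intervalIntegrable
    rw [uIcc_of_le ht.1]
    exact hg.mono hsub
  have := intervalIntegral.integral_eq_sub_of_hasDerivAt_of_le ht.1 (hyc.mono hsub) hderiv hint
  linarith

lemma lip_of_integral {a B : ℝ} {y g : ℝ → ℝ}
    (hy : ∀ t ∈ Icc (0:ℝ) a, y t = y 0 + ∫ s in (0:ℝ)..t, g s)
    (hg : ContinuousOn g (Icc (0:ℝ) a)) (hgB : ∀ s ∈ Icc (0:ℝ) a, |g s| ≤ B) :
    ∀ t ∈ Icc (0:ℝ) a, ∀ s ∈ Icc (0:ℝ) a, |y t - y s| ≤ B * |t - s| := by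
  have hii : ∀ s ∈ Icc (0:ℝ) a, ∀ t ∈ Icc (0:ℝ) a, s ≤ t → IntervalIntegrable g volume s t := by
    intro s hs t ht hst
    apply ContinuousOn.intervalIntegrable
    rw [uIcc_of_le hst]
    exact hg.mono (Icc_subset_Icc hs.1 ht.2)
  have key : ∀ t ∈ Icc (0:ℝ) a, ∀ s ∈ Icc (0:ℝ) a, s ≤ t → |y t - y s| ≤ B * |t - s| := by
    intro t ht s hs hst
    have h1 : y t - y s = ∫ u in s..t, g u := by
      rw [hy t ht, hy s hs]
      rw [← intervalIntegral.integral_add_adjacent_intervals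
        (hii 0 (left_mem_Icc.mpr (hs.1.trans hs.2)) s hs hs.1) (hii s hs t ht hst)]
      ring
    rw [h1]
    have hb := intervalIntegral.norm_integral_le_of_norm_le_const (C := B) (f := g)
      (a := s) (b := t) ?_
    · calc |∫ u in s..t, g u| = ‖∫ u in s..t, g u‖ := (Real.norm_eq_abs _).symm
        _ ≤ B * |t - s| := hb
    · intro x hx
      rw [uIoc_of_le hst] at hx
      exact hgB x ⟨hs.1.trans hx.1.le, hx.2.trans ht.2⟩
  intro t ht s hs
  rcases le_total s t with h | h
  · exact key t ht s hs h
  · rw [abs_sub_comm (y t), abs_sub_comm t]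
    exact key s hs t ht h


set_option maxHeartbeats 1000000 in
theorem peano0 (F : ℝ → ℝ → ℝ) (hF : Continuous fun p : ℝ × ℝ => F p.1 p.2) :
    ∃ a > (0:ℝ), ∃ y : ℝ → ℝ, y 0 = 0 ∧
      ∀ t ∈ Icc (0:ℝ) a, HasDerivWithinAt y (F t (y t)) (Icc (0:ℝ) a) t := by
  classical
  set G : ℝ → ℝ → ℝ := fun t x => F (cl t) (cl x) with hGdef
  have hGF : ∀ t x : ℝ, t ∈ Icc (-1:ℝ) 1 → x ∈ Icc (-1:ℝ) 1 → G t x = F t x := by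
    intro t x h1 h2
    rw [hGdef]
    dsimp only
    rw [cl_eq h1, cl_eq h2]
  have hclc : Continuous cl := continuous_const.max (continuous_const.min continuous_id)
  have hGcont : Continuous fun p : ℝ × ℝ => G p.1 p.2 :=
    hF.comp ((hclc.comp continuous_fst).prodMk (hclc.comp continuous_snd))
  obtain ⟨B, hB1, hB⟩ : ∃ B : ℝ, 1 ≤ B ∧ ∀ t x, |G t x| ≤ B := by
    obtain ⟨z, hz, hmax⟩ := IsCompact.exists_isMaxOn
      ((isCompact_Icc.prod isCompact_Icc) : IsCompact (Icc (-1:ℝ) 1 ×ˢ Icc (-1:ℝ) 1))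
      (Set.nonempty_of_mem (Set.mk_mem_prod (left_mem_Icc.mpr (by norm_num : (-1:ℝ) ≤ 1))
        (left_mem_Icc.mpr (by norm_num : (-1:ℝ) ≤ 1))))
      ((continuous_abs.comp hF).continuousOn)
    refine ⟨max 1 |F z.1 z.2|, le_max_left _ _, fun t x => ?_⟩
    have hcl : ((cl t, cl x) : ℝ × ℝ) ∈ Icc (-1:ℝ) 1 ×ˢ Icc (-1:ℝ) 1 := ⟨cl_mem t, cl_mem x⟩
    exact le_trans (hmax hcl) (le_max_right _ _)
  have hB0 : 0 < B := lt_of_lt_of_le one_pos hB1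
  have hGu : ∀ ε > (0:ℝ), ∃ δ > (0:ℝ), ∀ t x s y : ℝ, |t - s| ≤ δ → |x - y| ≤ δ →
      |G t x - G s y| ≤ ε := by
    intro ε hε
    have hK : IsCompact (Icc (-1:ℝ) 1 ×ˢ Icc (-1:ℝ) 1) := isCompact_Icc.prod isCompact_Icc
    have hUC := hK.uniformContinuousOn_of_continuous hF.continuousOn
    rw [Metric.uniformContinuousOn_iff] at hUC
    obtain ⟨δ, hδpos, hδ⟩ := hUC ε hε
    refine ⟨δ/2, by positivity, fun t x s y hts hxy => ?_⟩
    have h1 : ((cl t, cl x) : ℝ × ℝ) ∈ Icc (-1:ℝ) 1 ×ˢ Icc (-1:ℝ) 1 := ⟨cl_mem t, cl_mem x⟩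
    have h2 : ((cl s, cl y) : ℝ × ℝ) ∈ Icc (-1:ℝ) 1 ×ˢ Icc (-1:ℝ) 1 := ⟨cl_mem s, cl_mem y⟩
    have hd : dist ((cl t, cl x) : ℝ × ℝ) ((cl s, cl y) : ℝ × ℝ) < δ := by
      rw [Prod.dist_eq]
      apply max_lt
      · rw [Real.dist_eq]
        calc |cl t - cl s| ≤ |t - s| := cl_lip t s
          _ ≤ δ/2 := hts
          _ < δ := by linarith
      · rw [Real.dist_eq]
        calc |cl x - cl y| ≤ |x - y| := cl_lip x y
          _ ≤ δ/2 := hxy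
          _ < δ := by linarith
    have hfin := hδ _ h1 _ h2 hd
    rw [Real.dist_eq] at hfin
    exact le_of_lt hfin
  have hcn : ∀ n : ℕ, (0:ℝ) ≤ (n:ℝ) + 1 := fun n => by positivity
  set a : ℝ := B⁻¹ with hadef
  have ha : 0 < a := by positivity
  have ha1 : a ≤ 1 := by
    rw [hadef]
    exact inv_le_one_of_one_le₀ hB1
  have haB : B * a = 1 := mul_inv_cancel₀ hB0.ne'
  have hsol : ∀ n : ℕ, ∃ y : ℝ → ℝ, y 0 = 0 ∧ ∀ t ∈ Icc (0:ℝ) a,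
      HasDerivWithinAt y (FnC G ((n:ℝ)+1) t (y t)) (Icc (0:ℝ) a) t := by
    intro n
    have hpl : IsPicardLindelof (fun t x => FnC G ((n:ℝ)+1) t x)
        (⟨0, left_mem_Icc.mpr ha.le⟩ : Icc (0:ℝ) a) 0 1 0 B.toNNReal
        (⟨(n:ℝ)+1, hcn n⟩ : NNReal) := by
      refine ⟨?_, ?_, ?_, ?_⟩
      · intro t _
        apply LipschitzWith.lipschitzOnWith
        apply LipschitzWith.of_dist_le_mul
        intro x z
        rw [Real.dist_eq, Real.dist_eq]
        exact FnC_lip hB (hcn n) t x z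
      · intro x _
        exact ((FnC_cont hB (hcn n) hGu).comp (continuous_id.prodMk continuous_const)).continuousOn
      · intro t _ x _
        rw [Real.norm_eq_abs, Real.coe_toNNReal B hB0.le]
        exact abs_FnC_le hB (hcn n) t x
      · rw [Real.coe_toNNReal B hB0.le]
        simp [max_eq_left ha.le, haB]
    obtain ⟨y, hy0, hy⟩ := hpl.exists_eq_forall_mem_Icc_hasDerivWithinAt₀
    exact ⟨y, hy0, hy⟩
  choose yn hy0 hyd using hsol
  have hyc : ∀ n : ℕ, ContinuousOn (yn n) (Icc 0 a) := fun n t ht => (hyd n t ht).continuousWithinAt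
  have hgc : ∀ n : ℕ, ContinuousOn (fun s => FnC G ((n:ℝ)+1) s (yn n s)) (Icc 0 a) := by
    intro n
    exact (FnC_cont hB (hcn n) hGu).comp_continuousOn (continuousOn_id.prodMk (hyc n))
  have hInt : ∀ n : ℕ, ∀ t ∈ Icc (0:ℝ) a, yn n t = ∫ s in (0:ℝ)..t, FnC G ((n:ℝ)+1) s (yn n s) := by
    intro n t ht
    have h := eq_integral_of_deriv (hyd n) (hgc n) t ht
    rw [hy0 n] at h
    simpa using h
  have hLip : ∀ n : ℕ, ∀ t ∈ Icc (0:ℝ) a, ∀ s ∈ Icc (0:ℝ) a, |yn n t - yn n s| ≤ B * |t - s| := by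
    intro n
    refine lip_of_integral (g := fun s => FnC G ((n:ℝ)+1) s (yn n s)) ?_ (hgc n) ?_
    · intro t ht
      rw [hy0 n]
      simpa using hInt n t ht
    · intro s _
      exact abs_FnC_le hB (hcn n) s (yn n s)
  have hbox : ∀ n : ℕ, ∀ t ∈ Icc (0:ℝ) a, |yn n t| ≤ 1 := by
    intro n t ht
    have h := hLip n t ht 0 (left_mem_Icc.mpr ha.le)
    rw [hy0 n, sub_zero, sub_zero, abs_of_nonneg ht.1] at h
    calc |yn n t| ≤ B * t := h
      _ ≤ B * a := by gcongr; exact ht.2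
      _ = 1 := haB
  have hmono : ∀ n : ℕ, ∀ t ∈ Icc (0:ℝ) a, yn n t ≤ yn (n+1) t := by
    intro n
    have hcast : ((n+1 : ℕ):ℝ) + 1 = (n:ℝ) + 2 := by push_cast; ring
    refine compare_sol hB (hcn n) (by linarith : (n:ℝ)+1 ≤ (n:ℝ)+2) ha
      (le_of_eq (by rw [hy0, hy0])) (hyd n) ?_
    intro t ht
    have h := hyd (n+1) t ht
    rwa [hcast] at h
  have hmono' : ∀ t ∈ Icc (0:ℝ) a, Monotone fun n => yn n t :=
    fun t ht => monotone_nat_of_le_succ fun n => hmono n t ht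
  set y : ℝ → ℝ := fun t => ⨆ n, yn n t with hydef
  have hbdd : ∀ t ∈ Icc (0:ℝ) a, BddAbove (range fun n => yn n t) := by
    intro t ht
    exact ⟨1, forall_mem_range.mpr fun n => le_trans (le_abs_self _) (hbox n t ht)⟩
  have hylim : ∀ t ∈ Icc (0:ℝ) a, Tendsto (fun n => yn n t) atTop (𝓝 (y t)) :=
    fun t ht => tendsto_atTop_ciSup (hmono' t ht) (hbdd t ht)
  have hy0' : y 0 = 0 := by
    rw [hydef]
    dsimp only
    have h : ∀ n : ℕ, yn n 0 = 0 := hy0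
    simp only [h, ciSup_const]
  have hybound : ∀ t ∈ Icc (0:ℝ) a, |y t| ≤ 1 := by
    intro t ht
    rw [abs_le]
    constructor
    · calc (-1:ℝ) ≤ yn 0 t := (abs_le.mp (hbox 0 t ht)).1
        _ ≤ y t := le_ciSup (hbdd t ht) 0
    · exact ciSup_le fun n => (abs_le.mp (hbox n t ht)).2
  have hyLip : ∀ t ∈ Icc (0:ℝ) a, ∀ s ∈ Icc (0:ℝ) a, |y t - y s| ≤ B * |t - s| := by
    intro t ht s hs
    rw [abs_sub_le_iff]
    constructor
    · have h1 : y t ≤ y s + B * |t - s| := by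
        refine ciSup_le fun n => ?_
        have h2 := (abs_le.mp (hLip n t ht s hs)).2
        have h3 : yn n s ≤ y s := le_ciSup (hbdd s hs) n
        linarith
      linarith
    · have h1 : y s ≤ y t + B * |t - s| := by
        refine ciSup_le fun n => ?_
        have h2 := (abs_le.mp (hLip n s hs t ht)).2
        have h3 : yn n t ≤ y t := le_ciSup (hbdd t ht) n
        rw [abs_sub_comm] at h2
        linarith
      linarith
  have hycont : ContinuousOn y (Icc 0 a) := by
    apply LipschitzOnWith.continuousOn (K := B.toNNReal)
    rw [lipschitzOnWith_iff_dist_le_mul]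
    intro t ht s hs
    rw [Real.dist_eq, Real.dist_eq, Real.coe_toNNReal B hB0.le]
    exact hyLip t ht s hs
  have hGyc : ContinuousOn (fun s => G s (y s)) (Icc 0 a) :=
    hGcont.comp_continuousOn (continuousOn_id.prodMk hycont)
  have hyInt : ∀ t ∈ Icc (0:ℝ) a, y t = ∫ s in (0:ℝ)..t, G s (y s) := by
    intro t ht
    have hsubI : uIoc (0:ℝ) t ⊆ Icc 0 a := by
      rw [uIoc_of_le ht.1]
      exact fun z hz => ⟨hz.1.le, hz.2.trans ht.2⟩
    have hlim2 : Tendsto (fun n : ℕ => ∫ s in (0:ℝ)..t, FnC G ((n:ℝ)+1) s (yn n s)) atTop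
        (𝓝 (∫ s in (0:ℝ)..t, G s (y s))) := by
      apply intervalIntegral.tendsto_integral_filter_of_dominated_convergence (bound := fun _ => B)
      · refine Eventually.of_forall fun n => ?_
        exact ((hgc n).mono hsubI).aestronglyMeasurable measurableSet_uIoc
      · refine Eventually.of_forall fun n => ?_
        refine Eventually.of_forall fun s => ?_
        intro _
        rw [Real.norm_eq_abs]
        exact abs_FnC_le hB (hcn n) s (yn n s)
      · exact intervalIntegrable_const
      · refine Eventually.of_forall fun s => ?_
        intro hs
        have hs' : s ∈ Icc (0:ℝ) a := hsubI hs
        rw [Metric.tendsto_atTop]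
        intro ε hε
        obtain ⟨N₀, hN₀⟩ := FnC_lower hB hGu (ε/3) (by positivity)
        obtain ⟨n₁, hn₁⟩ := exists_nat_ge N₀
        obtain ⟨δ, hδpos, hδ⟩ := hGu (ε/3) (by positivity)
        have hys := Metric.tendsto_atTop.mp (hylim s hs') δ hδpos
        obtain ⟨N₂, hN₂⟩ := hys
        refine ⟨max n₁ N₂, fun n hn => ?_⟩
        have hn₁' : n₁ ≤ n := le_trans (le_max_left _ _) hn
        have hN₂' : N₂ ≤ n := le_trans (le_max_right _ _) hn
        have h1 : G s (yn n s) - ε/3 ≤ FnC G ((n:ℝ)+1) s (yn n s) := by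
          refine hN₀ ((n:ℝ)+1) ?_ (hcn n) s (yn n s)
          calc N₀ ≤ (n₁:ℝ) := hn₁
            _ ≤ (n:ℝ) := by exact_mod_cast hn₁'
            _ ≤ (n:ℝ)+1 := by linarith
        have h2 : FnC G ((n:ℝ)+1) s (yn n s) ≤ G s (yn n s) := FnC_le_G hB (hcn n) s (yn n s)
        have h3 : |G s (yn n s) - G s (y s)| ≤ ε/3 := by
          refine hδ s (yn n s) s (y s) (by simpa using hδpos.le) ?_
          have := hN₂ n hN₂'
          rw [Real.dist_eq] at this
          exact this.le
        rw [Real.dist_eq]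
        have : |FnC G ((n:ℝ)+1) s (yn n s) - G s (y s)| ≤
            |FnC G ((n:ℝ)+1) s (yn n s) - G s (yn n s)| + |G s (yn n s) - G s (y s)| :=
          abs_sub_le _ _ _
        have h4 : |FnC G ((n:ℝ)+1) s (yn n s) - G s (yn n s)| ≤ ε/3 := by
          rw [abs_le]
          constructor <;> linarith
        calc |FnC G ((n:ℝ)+1) s (yn n s) - G s (y s)| ≤ ε/3 + ε/3 := by linarith
          _ < ε := by linarith
    have heq : (fun n : ℕ => ∫ s in (0:ℝ)..t, FnC G ((n:ℝ)+1) s (yn n s)) = fun n => yn n t :=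
      funext fun n => (hInt n t ht).symm
    rw [heq] at hlim2
    exact tendsto_nhds_unique (hylim t ht) hlim2
  -- conclusion: y has the required derivative
  set claI : ℝ → ℝ := fun s => max 0 (min a s) with hclaIdef
  have hclaI_mem : ∀ s : ℝ, claI s ∈ Icc (0:ℝ) a := by
    intro s
    constructor
    · exact le_max_left _ _
    · rw [hclaIdef]
      dsimp only
      rw [max_le_iff]
      exact ⟨ha.le, min_le_left _ _⟩
  have hclaI_eq : ∀ s ∈ Icc (0:ℝ) a, claI s = s := by
    intro s hs
    rw [hclaIdef]
    dsimp only
    rw [min_eq_right hs.2, max_eq_right hs.1]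
  have hclaIc : Continuous claI := continuous_const.max (continuous_const.min continuous_id)
  have hYc : Continuous fun s => y (claI s) :=
    hycont.comp_continuous hclaIc hclaI_mem
  have hh : Continuous fun s => G s (y (claI s)) :=
    hGcont.comp (continuous_id.prodMk hYc)
  refine ⟨a, ha, y, hy0', ?_⟩
  intro t ht
  have hYd : HasDerivAt (fun u => ∫ s in (0:ℝ)..u, G s (y (claI s))) (G t (y (claI t))) t :=
    (hh.integral_hasStrictDerivAt 0 t).hasDerivAt
  have hEq : ∀ u ∈ Icc (0:ℝ) a, (∫ s in (0:ℝ)..u, G s (y (claI s))) = y u := by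
    intro u hu
    rw [hyInt u hu]
    apply intervalIntegral.integral_congr
    intro s hs
    rw [uIcc_of_le hu.1] at hs
    have hss : s ∈ Icc (0:ℝ) a := ⟨hs.1, hs.2.trans hu.2⟩
    show G s (y (claI s)) = G s (y s)
    rw [hclaI_eq s hss]
  have hfinal : HasDerivWithinAt y (G t (y (claI t))) (Icc (0:ℝ) a) t :=
    hYd.hasDerivWithinAt.congr (fun u hu => (hEq u hu).symm) (hEq t ht).symm
  have hval : G t (y (claI t)) = F t (y t) := by
    rw [hclaI_eq t ht]
    refine hGF t (y t) ⟨?_, ?_⟩ (abs_le.mp (hybound t ht))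
    · linarith [ht.1]
    · linarith [ht.2, ha1]
  rwa [hval] at hfinal


theorem peano (F : ℝ → ℝ → ℝ) (hF : Continuous fun p : ℝ × ℝ => F p.1 p.2) (t₀ x₀ : ℝ) :
    ∃ a > (0:ℝ), ∃ y : ℝ → ℝ, y t₀ = x₀ ∧
      ∀ t ∈ Icc t₀ (t₀ + a), HasDerivWithinAt y (F t (y t)) (Icc t₀ (t₀ + a)) t := by
  obtain ⟨a, ha, z, hz0, hzd⟩ := peano0 (fun s x => F (t₀ + s) (x₀ + x))
    (by
      have : (fun p : ℝ × ℝ => F (t₀ + p.1) (x₀ + p.2)) =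
          (fun p : ℝ × ℝ => F p.1 p.2) ∘ (fun p : ℝ × ℝ => (t₀ + p.1, x₀ + p.2)) := rfl
      rw [this]
      exact hF.comp ((continuous_const.add continuous_fst).prodMk
        (continuous_const.add continuous_snd)))
  refine ⟨a, ha, fun t => x₀ + z (t - t₀), by simp [hz0], ?_⟩
  intro t ht
  have ht' : t - t₀ ∈ Icc (0:ℝ) a := ⟨by linarith [ht.1], by linarith [ht.2]⟩
  have h1 : HasDerivWithinAt z (F (t₀ + (t - t₀)) (x₀ + z (t - t₀))) (Icc 0 a) (t - t₀) :=
    hzd (t - t₀) ht'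
  have h2 : HasDerivWithinAt (fun u => u - t₀) 1 (Icc t₀ (t₀ + a)) t := by
    simpa using (hasDerivWithinAt_id t (Icc t₀ (t₀+a))).sub_const t₀
  have hmaps : MapsTo (fun u => u - t₀) (Icc t₀ (t₀ + a)) (Icc 0 a) := by
    intro u hu
    simp only [mem_Icc] at hu ⊢
    constructor <;> [linarith [hu.1]; linarith [hu.2]]
  have h3 := HasDerivWithinAt.comp t h1 h2 hmaps
  have h4 := h3.const_add x₀
  have heq : t₀ + (t - t₀) = t := by ring
  rw [heq] at h4
  simpa using h4

variable (f : ℝ × ℝ → ℝ)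

lemma fderiv_dir (hf : Differentiable ℝ f)
    (heq : ∀ p : ℝ × ℝ, fderiv ℝ f p (1, 0) + f p * fderiv ℝ f p (0, 1) = 0)
    (p : ℝ × ℝ) : fderiv ℝ f p ((1 : ℝ), f p) = 0 := by
  have h1 : ((1 : ℝ), f p) = ((1:ℝ), (0:ℝ)) + f p • ((0:ℝ), (1:ℝ)) := by
    simp [Prod.ext_iff]
  rw [h1, map_add, ContinuousLinearMap.map_smul, smul_eq_mul]
  exact heq p

lemma const_along_sol (hf : Differentiable ℝ f)
    (heq : ∀ p : ℝ × ℝ, fderiv ℝ f p (1, 0) + f p * fderiv ℝ f p (0, 1) = 0)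
    {t₀ a : ℝ} (ha : 0 < a) {y : ℝ → ℝ}
    (hyd : ∀ t ∈ Icc t₀ (t₀+a), HasDerivWithinAt y (f (t, y t)) (Icc t₀ (t₀+a)) t) :
    ∀ t ∈ Icc t₀ (t₀+a), f (t, y t) = f (t₀, y t₀) := by
  set w : ℝ → ℝ := fun t => f (t, y t) with hwdef
  have hwd : ∀ t ∈ Icc t₀ (t₀+a), HasDerivWithinAt w 0 (Icc t₀ (t₀+a)) t := by
    intro t ht
    have hcurve : HasDerivWithinAt (fun u => ((u, y u) : ℝ × ℝ)) ((1:ℝ), f (t, y t))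
        (Icc t₀ (t₀+a)) t :=
      HasDerivWithinAt.prodMk (hasDerivWithinAt_id t _) (hyd t ht)
    have hcomp := (hf (t, y t)).hasFDerivAt.comp_hasDerivWithinAt t hcurve
    have hval : fderiv ℝ f (t, y t) ((1:ℝ), f (t, y t)) = 0 := fderiv_dir f hf heq (t, y t)
    rw [hval] at hcomp
    exact hcomp
  have hwc : ContinuousOn w (Icc t₀ (t₀+a)) := fun t ht => (hwd t ht).continuousWithinAt
  intro t ht
  refine constant_of_has_deriv_right_zero hwc ?_ t ht
  intro x hx
  exact (hwd x ⟨hx.1, hx.2.le⟩).mono_of_mem_nhdsWithin (Icc_mem_nhdsGE_of_mem ⟨hx.1, hx.2⟩)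

lemma sol_linear (hf : Differentiable ℝ f)
    (heq : ∀ p : ℝ × ℝ, fderiv ℝ f p (1, 0) + f p * fderiv ℝ f p (0, 1) = 0)
    {t₀ a : ℝ} (ha : 0 < a) {y : ℝ → ℝ}
    (hyd : ∀ t ∈ Icc t₀ (t₀+a), HasDerivWithinAt y (f (t, y t)) (Icc t₀ (t₀+a)) t) :
    ∀ t ∈ Icc t₀ (t₀+a), y t = y t₀ + f (t₀, y t₀) * (t - t₀) := by
  have hconst := const_along_sol f hf heq ha hyd
  set c : ℝ := f (t₀, y t₀) with hcdef
  set u : ℝ → ℝ := fun t => y t - c * t with hudef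
  have hud : ∀ t ∈ Icc t₀ (t₀+a), HasDerivWithinAt u 0 (Icc t₀ (t₀+a)) t := by
    intro t ht
    have h1 : HasDerivWithinAt (fun t => c * t) c (Icc t₀ (t₀+a)) t := by
      simpa using (hasDerivWithinAt_id t (Icc t₀ (t₀+a))).const_mul c
    have h2 := (hyd t ht).sub h1
    rw [hconst t ht] at h2
    rw [sub_self] at h2
    exact h2
  have huc : ContinuousOn u (Icc t₀ (t₀+a)) := fun t ht => (hud t ht).continuousWithinAt
  intro t ht
  have := constant_of_has_deriv_right_zero huc
    (fun x hx => (hud x ⟨hx.1, hx.2.le⟩).mono_of_mem_nhdsWithin (Icc_mem_nhdsGE_of_mem ⟨hx.1, hx.2⟩)) t ht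
  have hu : y t - c * t = y t₀ - c * t₀ := this
  linarith [hu]


lemma forward (hf : Differentiable ℝ f)
    (heq : ∀ p : ℝ × ℝ, fderiv ℝ f p (1, 0) + f p * fderiv ℝ f p (0, 1) = 0)
    (p : ℝ × ℝ) : ∀ T : ℝ, 0 ≤ T → f (p.1 + T, p.2 + T * f p) = f p := by
  set c := f p with hcdef
  set φ : ℝ → ℝ := fun u => f (p.1 + u, p.2 + u * c) with hφdef
  have hφc : Continuous φ := by
    apply hf.continuous.comp
    exact (continuous_const.add continuous_id).prodMk
      (continuous_const.add (continuous_id.mul continuous_const))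
  have hφ0 : φ 0 = c := by
    rw [hφdef]
    dsimp only
    norm_num
    exact hcdef.symm
  intro N hN
  set S : Set ℝ := {T | T ∈ Icc 0 N ∧ ∀ u ∈ Icc (0:ℝ) T, φ u = c} with hSdef
  have h0S : (0:ℝ) ∈ S := by
    refine ⟨left_mem_Icc.mpr hN, ?_⟩
    intro u hu
    have : u = 0 := le_antisymm hu.2 hu.1
    rw [this, hφ0]
  have hbdd : BddAbove S := ⟨N, fun T hT => hT.1.2⟩
  have hne : S.Nonempty := ⟨0, h0S⟩
  set s₀ := sSup S with hs₀def
  have hs00 : 0 ≤ s₀ := le_csSup hbdd h0S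
  have hs0N : s₀ ≤ N := csSup_le hne fun T hT => hT.1.2
  have hgood_lt : ∀ u, 0 ≤ u → u < s₀ → φ u = c := by
    intro u hu0 hus
    obtain ⟨T, hTS, hT⟩ := exists_lt_of_lt_csSup hne hus
    exact hTS.2 u ⟨hu0, hT.le⟩
  have hgood_s : φ s₀ = c := by
    rcases eq_or_lt_of_le hs00 with h | h
    · rw [← h, hφ0]
    · have hlim : Tendsto φ (𝓝[<] s₀) (𝓝 (φ s₀)) :=
        (hφc.continuousAt).continuousWithinAt.tendsto
      have hev : ∀ᶠ u in 𝓝[<] s₀, φ u = c := by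
        filter_upwards [Ioo_mem_nhdsLT_of_mem (⟨h, le_rfl⟩ : s₀ ∈ Ioc 0 s₀)] with u hu
        exact hgood_lt u hu.1.le hu.2
      have hev' : φ =ᶠ[𝓝[<] s₀] fun _ => c := hev
      have hlim2 : Tendsto φ (𝓝[<] s₀) (𝓝 c) := Tendsto.congr' hev'.symm tendsto_const_nhds
      exact tendsto_nhds_unique hlim hlim2
  have hgood_le : ∀ u ∈ Icc (0:ℝ) s₀, φ u = c := by
    intro u hu
    rcases lt_or_eq_of_le hu.2 with h | h
    · exact hgood_lt u hu.1 h
    · rw [h]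
      exact hgood_s
  have hcontF : Continuous fun q : ℝ × ℝ => f (q.1, q.2) := by
    have h : (fun q : ℝ × ℝ => f (q.1, q.2)) = f := by
      funext q
      rfl
    rw [h]
    exact hf.continuous
  obtain ⟨a, haa, y, hy0, hyd⟩ := peano (fun t x => f (t, x)) hcontF (p.1 + s₀) (p.2 + s₀ * c)
  have hq : f (p.1 + s₀, p.2 + s₀ * c) = c := hgood_s
  have hlin := sol_linear f hf heq haa hyd
  have hcval := const_along_sol f hf heq haa hyd
  have hfin : s₀ = N := by
    by_contra hne'
    have hslt : s₀ < N := lt_of_le_of_ne hs0N hne'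
    set T' := min N (s₀ + a) with hT'def
    have hT'S : T' ∈ S := by
      refine ⟨⟨le_min hN (by linarith), min_le_left _ _⟩, ?_⟩
      intro u hu
      rcases le_or_gt u s₀ with h | h
      · exact hgood_le u ⟨hu.1, h⟩
      · have huT : u ≤ s₀ + a := le_trans hu.2 (min_le_right _ _)
        have hu1 : p.1 + s₀ ≤ p.1 + u := by linarith
        have hu2 : p.1 + u ≤ p.1 + s₀ + a := by linarith
        have hy := hlin (p.1 + u) ⟨hu1, hu2⟩
        have hc2 := hcval (p.1 + u) ⟨hu1, hu2⟩
        rw [hy0] at hy hc2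
        rw [hq] at hy
        have hyval : y (p.1 + u) = p.2 + u * c := by
          rw [hy]
          ring
        show φ u = c
        rw [hφdef]
        dsimp only
        rw [← hyval]
        rw [hc2]
        exact hq
    have h1 : T' ≤ s₀ := le_csSup hbdd hT'S
    have h2 : s₀ < T' := lt_min hslt (by linarith)
    linarith
  have : φ N = c := by
    rw [← hfin]
    exact hgood_s
  exact this


lemma both (hf : Differentiable ℝ f)
    (heq : ∀ p : ℝ × ℝ, fderiv ℝ f p (1, 0) + f p * fderiv ℝ f p (0, 1) = 0)
    (p : ℝ × ℝ) (T : ℝ) : f (p.1 + T, p.2 + T * f p) = f p := by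
  rcases le_or_gt 0 T with hT | hT
  · exact forward f hf heq p T hT
  · set g : ℝ × ℝ → ℝ := fun z => f (-z) with hgdef
    have hg : Differentiable ℝ g := hf.comp differentiable_id.neg
    have hgfd : ∀ (qq : ℝ × ℝ) (v : ℝ × ℝ), fderiv ℝ g qq v = - fderiv ℝ f (-qq) v := by
      intro qq v
      have h1 : HasFDerivAt (fun z : ℝ × ℝ => -z)
          (-(ContinuousLinearMap.id ℝ (ℝ × ℝ))) qq := (hasFDerivAt_id qq).neg
      have h2 := (hf (-qq)).hasFDerivAt.comp qq h1
      have h2' : HasFDerivAt g ((fderiv ℝ f (-qq)).comp (-ContinuousLinearMap.id ℝ (ℝ × ℝ))) qq := h2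
      rw [h2'.fderiv]
      simp
    have heqg : ∀ qq : ℝ × ℝ, fderiv ℝ g qq (1, 0) + g qq * fderiv ℝ g qq (0, 1) = 0 := by
      intro qq
      rw [hgfd qq (1,0), hgfd qq (0,1)]
      have h3 := heq (-qq)
      have h4 : g qq = f (-qq) := rfl
      rw [h4]
      linarith
    have hfor := forward g hg heqg (-p) (-T) (by linarith)
    have h5 : g ((-p).1 + -T, (-p).2 + -T * g (-p)) = g (-p) := hfor
    have h6 : g (-p) = f p := by
      rw [hgdef]
      simp
    rw [h6] at h5
    have h7 : g ((-p).1 + -T, (-p).2 + -T * f p) = f (p.1 + T, p.2 + T * f p) := by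
      rw [hgdef]
      show f (-((-p).1 + -T, (-p).2 + -T * f p)) = _
      have : -(((-p).1 + -T, (-p).2 + -T * f p) : ℝ × ℝ) = (p.1 + T, p.2 + T * f p) := by
        simp [Prod.ext_iff]
        constructor <;> ring
      rw [this]
    rw [h7] at h5
    exact h5

end Stmt0Aux

/-- Lemma: if `f : ℝ² → ℝ` is differentiable and `∂f/∂x + f·∂f/∂y = 0` everywhere,
then `f` is constant. -/
theorem stmt_0 (f : ℝ × ℝ → ℝ) (hf : Differentiable ℝ f)
    (heq : ∀ p : ℝ × ℝ, fderiv ℝ f p (1, 0) + f p * fderiv ℝ f p (0, 1) = 0) :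
    ∀ p q : ℝ × ℝ, f p = f q := by
  intro p q
  by_contra hne
  have hcd : f p - f q ≠ 0 := sub_ne_zero.mpr hne
  obtain ⟨T, hT⟩ : ∃ T : ℝ, T * (f p - f q) = q.2 - p.2 + (p.1 - q.1) * f q :=
    ⟨(q.2 - p.2 + (p.1 - q.1) * f q) / (f p - f q), by field_simp⟩
  obtain ⟨S, hS⟩ : ∃ S : ℝ, S = p.1 + T - q.1 := ⟨_, rfl⟩
  have h1 : f (p.1 + T, p.2 + T * f p) = f p := Stmt0Aux.both f hf heq p T
  have h2 : f (q.1 + S, q.2 + S * f q) = f q := Stmt0Aux.both f hf heq q S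
  have hx : q.1 + S = p.1 + T := by
    rw [hS]
    ring
  have hy : q.2 + S * f q = p.2 + T * f p := by
    rw [hS]
    linear_combination -hT
  rw [hx, hy] at h2
  rw [h1] at h2
  exact hne h2
end

section
/- Let F : ℝ² → ℝ² be a map satisfying F(u + t·F(u)) = F(u) for all u ∈ ℝ² and all t ∈ ℝ, and suppose the first component of F is identically 1. Then F is constant. -/
/-- If `F : ℝ² → ℝ²` satisfies `F (u + t • F u) = F u` for all `u, t`, and the first
component of `F` is identically `1`, then `F` is constant. -/
theorem stmt_1 (F : ℝ × ℝ → ℝ × ℝ)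
    (h1 : ∀ u : ℝ × ℝ, (F u).1 = 1)
    (hF : ∀ (u : ℝ × ℝ) (t : ℝ), F (u + t • F u) = F u) :
    ∀ u v : ℝ × ℝ, F u = F v := by
  intro u v
  set fu := (F u).2 with hfu
  set fv := (F v).2 with hfv
  by_cases hd : fu = fv
  · ext
    · rw [h1 u, h1 v]
    · exact hd
  · have d : fu - fv ≠ 0 := sub_ne_zero.mpr hd
    set a := v.1 - u.1
    set b := v.2 - u.2
    set t := (b - a * fv) / (fu - fv) with ht
    set s := t - a with hs
    have key : u + t • F u = v + s • F v := by
      ext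
      · simp [Prod.smul_def, h1 u, h1 v, hs]
        ring
      · simp [Prod.smul_def, ← hfu, ← hfv, hs, ht]
        field_simp
        ring
    calc F u = F (u + t • F u) := (hF u t).symm
    _ = F (v + s • F v) := by rw [key]
    _ = F v := hF v s
end

section
/- If F : ℝ² → ℝ² satisfies F(u + t·F(u)) = F(u) for all u, t, and there exist u, v with F(u), F(v) linearly independent, then F(u) = F(v) (a contradiction); hence all values of F are pairwise linearly dependent. -/
/-- If `F : ℝ² → ℝ²` satisfies `F (u + t • F u) = F u` for all `u, t`, then all values
of `F` are pairwise linearly dependent. -/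
theorem stmt_2 (F : ℝ × ℝ → ℝ × ℝ)
    (hF : ∀ (u : ℝ × ℝ) (t : ℝ), F (u + t • F u) = F u) :
    ∀ u v : ℝ × ℝ, ¬ LinearIndependent ℝ ![F u, F v] := by
  intro u v h
  -- the two independent vectors form a basis of ℝ²
  have hcard : Fintype.card (Fin 2) = Module.finrank ℝ (ℝ × ℝ) := by
    rw [Fintype.card_fin, Module.finrank_prod]; simp
  let b := basisOfLinearIndependentOfCardEqFinrank h hcard
  have hb : ∀ i, b i = ![F u, F v] i := fun i => by
    simp [b, basisOfLinearIndependentOfCardEqFinrank]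
  -- express v - u in the basis
  obtain ⟨a0, a1, hsum⟩ : ∃ a0 a1 : ℝ, v - u = a0 • F u + a1 • F v := by
    refine ⟨b.repr (v - u) 0, b.repr (v - u) 1, ?_⟩
    have := b.sum_repr (v - u)
    rw [Fin.sum_univ_two] at this
    rw [hb 0, hb 1] at this
    simpa using this.symm
  have key : u + a0 • F u = v + (-a1) • F v := by
    set x := F u with hx
    set y := F v with hy
    rw [sub_eq_iff_eq_add] at hsum
    rw [hsum]; module
  have : F u = F v := by
    calc F u = F (u + a0 • F u) := (hF u a0).symm
    _ = F (v + (-a1) • F v) := by rw [key]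
    _ = F v := hF v (-a1)
  exact absurd (h.injective (show ![F u, F v] 0 = ![F u, F v] 1 by simpa using this))
    (by decide)
end

section
/- Let V be a finite-dimensional real vector space with a commutative bilinear product • on V* and a symmetric bilinear form B on V*. Define h(α,β)(u) = ⟨α•β, u⟩ + B(α,β) for α,β ∈ V*, u ∈ V. Then the contravariant Codazzi equation holds for h (with respect to the canonical flat connection on V) if and only if • is associative and B satisfies B(α•β, γ) = B(α, β•γ) for all α,β,γ ∈ V*. -/
open Module

/-- The contraction `h_#(α)(u)` of the affine bivector
`h(α,β)(u) = ⟨α•β, u⟩ + B(α,β)` on a finite-dimensional real vector space `V`: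
it is the vector in `V` representing the linear form `β ↦ h(α,β)(u)` on `V*`. -/
noncomputable def affineHSharp {V : Type*} [NormedAddCommGroup V] [NormedSpace ℝ V]
    [FiniteDimensional ℝ V]
    (mul : Dual ℝ V →ₗ[ℝ] Dual ℝ V →ₗ[ℝ] Dual ℝ V)
    (B : Dual ℝ V →ₗ[ℝ] Dual ℝ V →ₗ[ℝ] ℝ) (α : Dual ℝ V) (u : V) : V :=
  (Module.evalEquiv ℝ V).symm ((LinearMap.applyₗ u).comp (mul α) + B α)

/-- For an affine symmetric bivector `h(α,β)(u) = ⟨α•β,u⟩ + B(α,β)` on a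
finite-dimensional real vector space (with its canonical flat connection), the
contravariant Codazzi equation holds iff `•` is associative and `B` is a scalar
2-cocycle of `(V*, •)`. -/
theorem stmt_3 {V : Type*} [NormedAddCommGroup V] [NormedSpace ℝ V]
    [FiniteDimensional ℝ V]
    (mul : Dual ℝ V →ₗ[ℝ] Dual ℝ V →ₗ[ℝ] Dual ℝ V)
    (B : Dual ℝ V →ₗ[ℝ] Dual ℝ V →ₗ[ℝ] ℝ)
    (hcomm : ∀ α β, mul α β = mul β α)
    (hBsymm : ∀ α β, B α β = B β α) :
    (∀ (α β γ : Dual ℝ V) (u : V),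
        fderiv ℝ (fun v => mul β γ v + B β γ) u (affineHSharp mul B α u)
          = fderiv ℝ (fun v => mul α γ v + B α γ) u (affineHSharp mul B β u))
      ↔ ((∀ α β γ, mul (mul α β) γ = mul α (mul β γ)) ∧
          (∀ α β γ, B (mul α β) γ = B α (mul β γ))) := by
  have heval : ∀ (α ξ : Dual ℝ V) (u : V),
      ξ (affineHSharp mul B α u) = mul α ξ u + B α ξ := by
    intro α ξ u
    simp [affineHSharp, Module.apply_evalEquiv_symm_apply]
  have hderiv : ∀ (β γ : Dual ℝ V) (u x : V),
      fderiv ℝ (fun v => mul β γ v + B β γ) u x = mul β γ x := by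
    intro β γ u x
    have h : HasFDerivAt (fun v => mul β γ v + B β γ)
        (LinearMap.toContinuousLinearMap (mul β γ)) u :=
      (LinearMap.toContinuousLinearMap (mul β γ)).hasFDerivAt.add_const (B β γ)
    rw [h.fderiv]; rfl
  have key : (∀ (α β γ : Dual ℝ V) (u : V),
      fderiv ℝ (fun v => mul β γ v + B β γ) u (affineHSharp mul B α u)
        = fderiv ℝ (fun v => mul α γ v + B α γ) u (affineHSharp mul B β u))
      ↔ (∀ α β γ : Dual ℝ V, ∀ u : V,
          mul α (mul β γ) u + B α (mul β γ) = mul β (mul α γ) u + B β (mul α γ)) := by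
    constructor
    · intro h α β γ u
      have := h α β γ u
      rw [hderiv, hderiv, heval, heval] at this
      exact this
    · intro h α β γ u
      rw [hderiv, hderiv, heval, heval]
      exact h α β γ u
  rw [key]
  constructor
  · intro h
    have hB : ∀ α β γ : Dual ℝ V, B α (mul β γ) = B β (mul α γ) := by
      intro α β γ
      have := h α β γ 0
      simpa using this
    have hm : ∀ α β γ : Dual ℝ V, mul α (mul β γ) = mul β (mul α γ) := by
      intro α β γ
      apply LinearMap.ext; intro u
      have h1 := h α β γ u
      have h2 := hB α β γ
      linarith
    constructor
    · intro α β γ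
      calc mul (mul α β) γ = mul γ (mul β α) := by rw [hcomm, hcomm α β]
        _ = mul β (mul γ α) := hm γ β α
        _ = mul β (mul α γ) := by rw [hcomm γ α]
        _ = mul α (mul β γ) := (hm α β γ).symm
    · intro α β γ
      calc B (mul α β) γ = B γ (mul β α) := by rw [hBsymm, hcomm α β]
        _ = B β (mul γ α) := hB γ β α
        _ = B β (mul α γ) := by rw [hcomm γ α]
        _ = B α (mul β γ) := (hB α β γ).symm
  · rintro ⟨hassoc, hcoc⟩ α β γ u
    have hm : mul α (mul β γ) = mul β (mul α γ) := by
      rw [← hassoc, hcomm α β, hassoc]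
    have hB : B α (mul β γ) = B β (mul α γ) := by
      rw [← hcoc, hcomm α β, hcoc]
    rw [hm, hB]
end

section
/- Let (𝔤, •) be a finite-dimensional left symmetric algebra and r a symmetric element of 𝔤 ⊗ 𝔤 with associated map r_# : 𝔤* → 𝔤. Suppose r_#([α,β]_r) = [r_#(α), r_#(β)] for all α, β ∈ 𝔤*, where [α,β]_r = L*_{r_#(α)}β − L*_{r_#(β)}α and ⟨L*_u α, v⟩ = −⟨α, u•v⟩. Then the product on 𝔤* defined by α·β = L*_{r_#(α)}β is left symmetric. -/
open Module

/-- The action `L*_u` on `𝔤*`, `⟨L*_u α, v⟩ = −⟨α, u•v⟩`. -/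
def lStar {G : Type*} [AddCommGroup G] [Module ℝ G]
    (mul : G →ₗ[ℝ] G →ₗ[ℝ] G) (u : G) (α : Dual ℝ G) : Dual ℝ G :=
  -(α.comp (mul u))

/-- Let `(𝔤,•)` be a finite-dimensional left symmetric algebra and `r` a symmetric
element of `𝔤 ⊗ 𝔤` (given by its contraction `r_# : 𝔤* → 𝔤`). If
`r_#([α,β]_r) = [r_#(α), r_#(β)]` for all `α,β ∈ 𝔤*`, then the product
`α·β = L*_{r_#(α)} β` on `𝔤*` is left symmetric. -/
theorem stmt_7 {G : Type*} [AddCommGroup G] [Module ℝ G] [FiniteDimensional ℝ G]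
    (mul : G →ₗ[ℝ] G →ₗ[ℝ] G)
    (hls : ∀ u v w : G,
      mul (mul u v) w - mul u (mul v w) = mul (mul v u) w - mul v (mul u w))
    (rsharp : Dual ℝ G →ₗ[ℝ] G)
    (hrsymm : ∀ α β : Dual ℝ G, α (rsharp β) = β (rsharp α))
    (hmorph : ∀ α β : Dual ℝ G,
      rsharp (lStar mul (rsharp α) β - lStar mul (rsharp β) α)
        = mul (rsharp α) (rsharp β) - mul (rsharp β) (rsharp α)) :
    ∀ α β γ : Dual ℝ G,
      lStar mul (rsharp (lStar mul (rsharp α) β)) γ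
          - lStar mul (rsharp α) (lStar mul (rsharp β) γ)
        = lStar mul (rsharp (lStar mul (rsharp β) α)) γ
          - lStar mul (rsharp β) (lStar mul (rsharp α) γ) := by
  intro α β γ
  set a := rsharp α with ha
  set b := rsharp β with hb
  have key : rsharp (lStar mul a β) - rsharp (lStar mul b α)
      = mul a b - mul b a := by
    rw [← map_sub]; exact hmorph α β
  ext w
  have hkey : mul (rsharp (lStar mul a β)) w - mul (rsharp (lStar mul b α)) w
      = mul (mul a b) w - mul (mul b a) w := by
    have := congrArg (fun x => mul x w) key
    simpa [map_sub] using this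
  have h := hls a b w
  simp only [lStar, LinearMap.sub_apply, LinearMap.neg_apply, LinearMap.comp_apply]
  have hγ : γ (mul (rsharp (lStar mul a β)) w) - γ (mul (rsharp (lStar mul b α)) w)
      = γ (mul (mul a b) w) - γ (mul (mul b a) w) := by
    rw [← map_sub, hkey, map_sub]
  simp only [lStar] at hγ
  have hγ2 : γ (mul (mul a b) w) - γ (mul a (mul b w))
      = γ (mul (mul b a) w) - γ (mul b (mul a w)) := by
    rw [← map_sub, ← map_sub, h]
  linarith
end

section
/- Let h be a smooth symmetric bivector field on ℝⁿ (with components h_{ij} = h(dx_i, dx_j)) satisfying the contravariant pseudo-Hessian equation Σ_l [h_{il} ∂_l h_{jk} − h_{jl} ∂_l h_{ik}] = 0 for all i,j,k, and suppose h(0) = 0. Then the product on (ℝⁿ)* defined by e_i* • e_j* = Σ_k ∂_k h_{ij}(0) e_k* is commutative and associative. -/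
open scoped BigOperators

private lemma sum4_comm {n : ℕ} (f : Fin n → Fin n → Fin n → Fin n → ℝ) :
    ∑ m, ∑ k, ∑ i, ∑ j, f i j k m = ∑ i, ∑ j, ∑ k, ∑ m, f i j k m := by
  calc ∑ m, ∑ k, ∑ i, ∑ j, f i j k m
      = ∑ k, ∑ m, ∑ i, ∑ j, f i j k m := Finset.sum_comm
    _ = ∑ k, ∑ i, ∑ j, ∑ m, f i j k m := by
        refine Finset.sum_congr rfl fun k _ => ?_
        calc ∑ m, ∑ i, ∑ j, f i j k m = ∑ i, ∑ m, ∑ j, f i j k m := Finset.sum_comm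
          _ = ∑ i, ∑ j, ∑ m, f i j k m :=
              Finset.sum_congr rfl fun i _ => Finset.sum_comm
    _ = ∑ i, ∑ k, ∑ j, ∑ m, f i j k m := Finset.sum_comm
    _ = ∑ i, ∑ j, ∑ k, ∑ m, f i j k m :=
        Finset.sum_congr rfl fun i _ => Finset.sum_comm

private lemma sum3_comm {n : ℕ} (f : Fin n → Fin n → Fin n → ℝ) :
    ∑ m, ∑ j, ∑ k, f j k m = ∑ j, ∑ k, ∑ m, f j k m := by
  calc ∑ m, ∑ j, ∑ k, f j k m = ∑ j, ∑ m, ∑ k, f j k m := Finset.sum_comm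
    _ = ∑ j, ∑ k, ∑ m, f j k m := Finset.sum_congr rfl fun j _ => Finset.sum_comm

/-- Let `h` be a smooth symmetric bivector field on `ℝⁿ` satisfying the contravariant
pseudo-Hessian (Codazzi) equation, with `h(0) = 0`. Then the product on `(ℝⁿ)*`
defined by `e_i* • e_j* = Σ_k ∂_k h_{ij}(0) e_k*` is commutative and associative. -/
theorem stmt_10 (n : ℕ) (h : Fin n → Fin n → (Fin n → ℝ) → ℝ)
    (hsmooth : ∀ i j, ContDiff ℝ (⊤ : ℕ∞) (h i j))
    (hsymm : ∀ i j, h i j = h j i)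
    (hcodazzi : ∀ (i j k : Fin n) (x : Fin n → ℝ),
      ∑ l, (h i l x * fderiv ℝ (h j k) x (Pi.single l 1)
        - h j l x * fderiv ℝ (h i k) x (Pi.single l 1)) = 0)
    (h0 : ∀ i j, h i j 0 = 0) :
    let c : Fin n → Fin n → Fin n → ℝ :=
      fun i j k => fderiv ℝ (h i j) 0 (Pi.single k 1)
    let p : (Fin n → ℝ) → (Fin n → ℝ) → (Fin n → ℝ) :=
      fun a b l => ∑ i, ∑ j, a i * b j * c i j l
    (∀ a b, p a b = p b a) ∧ (∀ a b d, p (p a b) d = p a (p b d)) := by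
  intro c p
  have hDdiff : ∀ (i j : Fin n) (l : Fin n),
      Differentiable ℝ (fun x => fderiv ℝ (h i j) x (Pi.single l 1)) := by
    intro i j l
    have h1 : ContDiff ℝ (⊤ : ℕ∞) (fun x => fderiv ℝ (h i j) x) :=
      (hsmooth i j).fderiv_right (by simp)
    exact (h1.clm_apply contDiff_const).differentiable (by simp)
  have csymm : ∀ i j k, c i j k = c j i k := by
    intro i j k; simp only [c, hsymm i j]
  have key : ∀ i j k m : Fin n,
      ∑ l, (c j k l * c i l m - c i k l * c j l m) = 0 := by
    intro i j k m
    have hterm : ∀ l : Fin n,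
        HasFDerivAt (fun x => h i l x * fderiv ℝ (h j k) x (Pi.single l 1)
          - h j l x * fderiv ℝ (h i k) x (Pi.single l 1))
        ((fderiv ℝ (h j k) 0 (Pi.single l 1)) • fderiv ℝ (h i l) 0
          - (fderiv ℝ (h i k) 0 (Pi.single l 1)) • fderiv ℝ (h j l) 0) 0 := by
      intro l
      have h1 := (((hsmooth i l).differentiable (by simp)) 0).hasFDerivAt.fun_mul
        ((hDdiff j k l 0).hasFDerivAt)
      have h2 := (((hsmooth j l).differentiable (by simp)) 0).hasFDerivAt.fun_mul
        ((hDdiff i k l 0).hasFDerivAt)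
      have h3 := h1.fun_sub h2
      simpa [h0, zero_smul] using h3
    have hsum : HasFDerivAt (fun x => ∑ l, (h i l x * fderiv ℝ (h j k) x (Pi.single l 1)
          - h j l x * fderiv ℝ (h i k) x (Pi.single l 1)))
        (∑ l, ((fderiv ℝ (h j k) 0 (Pi.single l 1)) • fderiv ℝ (h i l) 0
          - (fderiv ℝ (h i k) 0 (Pi.single l 1)) • fderiv ℝ (h j l) 0)) 0 :=
      HasFDerivAt.fun_sum (fun l _ => hterm l)
    have hzero : HasFDerivAt (fun x : Fin n → ℝ => ∑ l, (h i l x * fderiv ℝ (h j k) x (Pi.single l 1)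
          - h j l x * fderiv ℝ (h i k) x (Pi.single l 1))) (0 : (Fin n → ℝ) →L[ℝ] ℝ) 0 := by
      have : (fun x : Fin n → ℝ => ∑ l, (h i l x * fderiv ℝ (h j k) x (Pi.single l 1)
          - h j l x * fderiv ℝ (h i k) x (Pi.single l 1))) = fun _ => (0:ℝ) := by
        funext x; exact hcodazzi i j k x
      rw [this]; exact hasFDerivAt_const 0 0
    have heq := hsum.unique hzero
    have := congrArg (fun (L : (Fin n → ℝ) →L[ℝ] ℝ) => L (Pi.single m 1)) heq
    simpa [ContinuousLinearMap.sum_apply, ContinuousLinearMap.sub_apply,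
      ContinuousLinearMap.smul_apply, smul_eq_mul, c] using this
  set S : Fin n → Fin n → Fin n → Fin n → ℝ :=
    fun i j k l => ∑ m, c i j m * c m k l with hS
  have Sswap13 : ∀ i j k l, S i j k l = S k j i l := by
    intro i j k l
    have hk := key k i j l
    have h5 : ∑ m, (c i j m * c k m l - c k j m * c i m l) = 0 := by
      simpa using hk
    have h4 : ∑ m, c i j m * c k m l = ∑ m, c k j m * c i m l := by
      rw [Finset.sum_sub_distrib] at h5; linarith [h5]
    simp only [hS]
    calc ∑ m, c i j m * c m k l = ∑ m, c i j m * c k m l :=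
          Finset.sum_congr rfl fun m _ => by rw [csymm m k]
      _ = ∑ m, c k j m * c i m l := h4
      _ = ∑ m, c k j m * c m i l :=
          Finset.sum_congr rfl fun m _ => by rw [csymm i m]
  have Sswap12 : ∀ i j k l, S i j k l = S j i k l := by
    intro i j k l
    simp only [hS]
    exact Finset.sum_congr rfl fun m _ => by rw [csymm i j]
  have Scyc : ∀ i j k l, S j k i l = S i j k l := by
    intro i j k l
    rw [Sswap13 j k i, Sswap12 i k j, Sswap13 k i j, Sswap12 j i k]
  constructor
  · intro a b
    funext l
    simp only [p]
    rw [Finset.sum_comm]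
    exact Finset.sum_congr rfl fun j _ => Finset.sum_congr rfl fun i _ => by
      rw [csymm i j]; ring
  · intro a b d
    funext l
    simp only [p]
    calc ∑ m, ∑ k, (∑ i, ∑ j, a i * b j * c i j m) * d k * c m k l
        = ∑ m, ∑ k, ∑ i, ∑ j, a i * b j * c i j m * d k * c m k l := by
          refine Finset.sum_congr rfl fun m _ => Finset.sum_congr rfl fun k _ => ?_
          rw [Finset.sum_mul, Finset.sum_mul]
          exact Finset.sum_congr rfl fun i _ => by rw [Finset.sum_mul, Finset.sum_mul]
      _ = ∑ i, ∑ j, ∑ k, ∑ m, a i * b j * c i j m * d k * c m k l := sum4_comm _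
      _ = ∑ i, ∑ j, ∑ k, a i * b j * d k * S i j k l := by
          refine Finset.sum_congr rfl fun i _ => Finset.sum_congr rfl fun j _ =>
            Finset.sum_congr rfl fun k _ => ?_
          simp only [hS, Finset.mul_sum]
          exact Finset.sum_congr rfl fun m _ => by ring
      _ = ∑ i, ∑ j, ∑ k, ∑ m, a i * (b j * d k * c j k m) * c i m l := by
          refine Finset.sum_congr rfl fun i _ => Finset.sum_congr rfl fun j _ =>
            Finset.sum_congr rfl fun k _ => ?_
          rw [← Scyc i j k]
          simp only [hS, Finset.mul_sum]
          refine Finset.sum_congr rfl fun m _ => ?_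
          rw [csymm m i]
          ring
      _ = ∑ i, ∑ m, ∑ j, ∑ k, a i * (b j * d k * c j k m) * c i m l :=
          Finset.sum_congr rfl fun i _ => (sum3_comm _).symm
      _ = ∑ i, ∑ m, a i * (∑ j, ∑ k, b j * d k * c j k m) * c i m l := by
          refine Finset.sum_congr rfl fun i _ => Finset.sum_congr rfl fun m _ => ?_
          rw [Finset.mul_sum, Finset.sum_mul]
          refine Finset.sum_congr rfl fun j _ => ?_
          rw [Finset.mul_sum, Finset.sum_mul]
end

section
/- Let 𝒜 be a commutative associative algebra and B a symmetric bilinear form on 𝒜. On 𝒜* with its canonical flat connection define h(u,v)(α) = ⟨α, u(α)•v(α)⟩ + B(u(α),v(α)) for 1-forms u,v (viewed as maps 𝒜* → 𝒜). If B satisfies B(a•b,c) = B(a,b•c), then for constant 1-forms a,b,c ∈ 𝒜, (∇_{h_#(a)}h)(b,c) = ⟨a•(b•c), ·⟩ + B(a, b•c) is symmetric in a and b; i.e., h satisfies the contravariant Codazzi equation on constant 1-forms. -/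
open Module

/-- Let `(𝒜,•)` be a finite-dimensional commutative associative real algebra and `B`
a symmetric bilinear form with `B(a•b,c) = B(a,b•c)`. On `𝒜*` with its canonical
affine structure and the bivector `h(u,v)(α) = ⟨α, u•v⟩ + B(u,v)`, with
`h_#(a)(α) = L*_a α + i_a B`, the covariant derivative on constant 1-forms is
`(∇_{h_#(a)}h)(b,c)(α) = ⟨a•(b•c), α⟩ + B(a, b•c)`, and it is symmetric in `a,b`:
`h` satisfies the contravariant Codazzi equation on constant 1-forms. -/
theorem stmt_17 {A : Type*} [AddCommGroup A] [Module ℝ A] [FiniteDimensional ℝ A]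
    (mul : A →ₗ[ℝ] A →ₗ[ℝ] A)
    (hcomm : ∀ a b : A, mul a b = mul b a)
    (hassoc : ∀ a b c : A, mul (mul a b) c = mul a (mul b c))
    (B : A →ₗ[ℝ] A →ₗ[ℝ] ℝ)
    (hBsymm : ∀ a b : A, B a b = B b a)
    (hcoc : ∀ a b c : A, B (mul a b) c = B a (mul b c)) :
    let hsharp : A → Dual ℝ A → Dual ℝ A := fun a α => α.comp (mul a) + B a
    -- derivative of the affine function `β ↦ β(b•c) + B(b,c)` in direction
    -- `h_#(a)(α)` is `(h_#(a)(α))(b•c)`: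
    let Dcov : A → A → A → Dual ℝ A → ℝ := fun a b c α => hsharp a α (mul b c)
    (∀ (a b c : A) (α : Dual ℝ A),
        Dcov a b c α = α (mul a (mul b c)) + B a (mul b c)) ∧
    (∀ (a b c : A) (α : Dual ℝ A), Dcov a b c α = Dcov b a c α) := by
  intro hsharp Dcov
  constructor
  · intro a b c α; simp [Dcov, hsharp]
  · intro a b c α
    simp only [Dcov, hsharp, LinearMap.add_apply, LinearMap.coe_comp, Function.comp_apply]
    rw [← hassoc a b c, hcomm a b, hassoc b a c, ← hcoc a b c, hcomm a b, hcoc b a c]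
end

section
/- On ℝ⁴ with canonical flat connection and coordinates (x,y,z,t), let X = cos(t)∂_x + sin(t)∂_y + ∂_z, Y = −sin(t)∂_x + cos(t)∂_y, and h = X⊗Y + Y⊗X. Then ∇_X X = ∇_X Y = ∇_Y X = ∇_Y Y = 0, h satisfies the contravariant Codazzi equation, and ∇_{∂_t} Y = −X + ∂_z does not lie in the span of X and Y; hence the rank-2 distribution span(X,Y) = Im h_# is not parallel. -/
open scoped BigOperators

noncomputable section StmtAux

private def pr3 : (Fin 4 → ℝ) →L[ℝ] ℝ := ContinuousLinearMap.proj 3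

private def Xf : (Fin 4 → ℝ) → (Fin 4 → ℝ) := fun p => ![Real.cos (p 3), Real.sin (p 3), 1, 0]
private def Yf : (Fin 4 → ℝ) → (Fin 4 → ℝ) := fun p => ![-Real.sin (p 3), Real.cos (p 3), 0, 0]
private def cX (p : Fin 4 → ℝ) : Fin 4 → ℝ := ![-Real.sin (p 3), Real.cos (p 3), 0, 0]
private def cY (p : Fin 4 → ℝ) : Fin 4 → ℝ := ![-Real.cos (p 3), -Real.sin (p 3), 0, 0]

private lemma hp3 (p : Fin 4 → ℝ) : HasFDerivAt (fun q : Fin 4 → ℝ => q 3) pr3 p :=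
  (ContinuousLinearMap.proj 3 : (Fin 4 → ℝ) →L[ℝ] ℝ).hasFDerivAt

private lemma hXc (p : Fin 4 → ℝ) (i : Fin 4) :
    HasFDerivAt (fun q => Xf q i) (cX p i • pr3) p := by
  fin_cases i <;> simp [Xf, cX]
  · exact (hp3 p).cos
  · exact (hp3 p).sin
  · exact hasFDerivAt_const 1 p
  · exact hasFDerivAt_const 0 p

private lemma hYc (p : Fin 4 → ℝ) (i : Fin 4) :
    HasFDerivAt (fun q => Yf q i) (cY p i • pr3) p := by
  fin_cases i <;> simp [Yf, cY]
  · have h0 := ((hp3 p).sin).neg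
    have he : (-(Real.cos (p 3) • pr3)) = (-Real.cos (p 3)) • pr3 := by
      ext v; simp [pr3]
    rwa [he] at h0
  · exact (hp3 p).cos
  · exact hasFDerivAt_const 0 p
  · exact hasFDerivAt_const 0 p

private def LX (p : Fin 4 → ℝ) : (Fin 4 → ℝ) →L[ℝ] (Fin 4 → ℝ) :=
  ContinuousLinearMap.pi fun i => cX p i • pr3
private def LY (p : Fin 4 → ℝ) : (Fin 4 → ℝ) →L[ℝ] (Fin 4 → ℝ) :=
  ContinuousLinearMap.pi fun i => cY p i • pr3

private lemma hXF (p : Fin 4 → ℝ) : HasFDerivAt Xf (LX p) p := by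
  rw [hasFDerivAt_pi']
  intro i
  rw [LX, ContinuousLinearMap.proj_pi]
  exact hXc p i

private lemma hYF (p : Fin 4 → ℝ) : HasFDerivAt Yf (LY p) p := by
  rw [hasFDerivAt_pi']
  intro i
  rw [LY, ContinuousLinearMap.proj_pi]
  exact hYc p i

private lemma fX (p : Fin 4 → ℝ) : fderiv ℝ Xf p = LX p := (hXF p).fderiv
private lemma fY (p : Fin 4 → ℝ) : fderiv ℝ Yf p = LY p := (hYF p).fderiv

private lemma LX_apply (p v : Fin 4 → ℝ) : LX p v = fun i => cX p i * v 3 := by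
  funext i; simp [LX, pr3]
private lemma LY_apply (p v : Fin 4 → ℝ) : LY p v = fun i => cY p i * v 3 := by
  funext i; simp [LY, pr3]

private lemma X3 (p : Fin 4 → ℝ) : Xf p 3 = 0 := by simp [Xf]
private lemma Y3 (p : Fin 4 → ℝ) : Yf p 3 = 0 := by simp [Yf]

/-- derivative of the scalar function `h j k`. -/
private lemma hH (j k : Fin 4) (p : Fin 4 → ℝ) :
    HasFDerivAt (fun q => Xf q j * Yf q k + Yf q j * Xf q k)
      ((Xf p j * cY p k + Yf p k * cX p j + Yf p j * cX p k + Xf p k * cY p j) • pr3) p := by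
  have h1 := ((hXc p j).mul (hYc p k)).add ((hYc p j).mul (hXc p k))
  have he : (Xf p j • (cY p k • pr3) + Yf p k • (cX p j • pr3)) +
      (Yf p j • (cX p k • pr3) + Xf p k • (cY p j • pr3))
      = (Xf p j * cY p k + Yf p k * cX p j + Yf p j * cX p k + Xf p k * cY p j) • pr3 := by
    ext v; simp [pr3]; ring
  rwa [he] at h1

private lemma fH (j k : Fin 4) (p : Fin 4 → ℝ) (l : Fin 4) :
    fderiv ℝ (fun q => Xf q j * Yf q k + Yf q j * Xf q k) p (Pi.single l 1)
      = (Xf p j * cY p k + Yf p k * cX p j + Yf p j * cX p k + Xf p k * cY p j)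
        * (Pi.single l 1 : Fin 4 → ℝ) 3 := by
  rw [(hH j k p).fderiv]
  simp [pr3, mul_comm]

end StmtAux

/-- On `ℝ⁴` with its canonical flat connection, with
`X = cos t ∂_x + sin t ∂_y + ∂_z`, `Y = −sin t ∂_x + cos t ∂_y` and
`h = X⊗Y + Y⊗X`: all the derivatives `∇_X X, ∇_X Y, ∇_Y X, ∇_Y Y` vanish, `h`
satisfies the contravariant Codazzi equation, and `∇_{∂_t} Y = −X + ∂_z` is not in
the span of `X` and `Y`; hence `Im h_# = span(X,Y)` is not parallel. -/
theorem stmt_19 :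
    let X : (Fin 4 → ℝ) → (Fin 4 → ℝ) :=
      fun p => ![Real.cos (p 3), Real.sin (p 3), 1, 0]
    let Y : (Fin 4 → ℝ) → (Fin 4 → ℝ) :=
      fun p => ![-Real.sin (p 3), Real.cos (p 3), 0, 0]
    let h : Fin 4 → Fin 4 → (Fin 4 → ℝ) → ℝ :=
      fun i j p => X p i * Y p j + Y p i * X p j
    (∀ p : Fin 4 → ℝ,
      fderiv ℝ X p (X p) = 0 ∧ fderiv ℝ Y p (X p) = 0 ∧
      fderiv ℝ X p (Y p) = 0 ∧ fderiv ℝ Y p (Y p) = 0) ∧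
    (∀ (i j k : Fin 4) (p : Fin 4 → ℝ),
      ∑ l, (h i l p * fderiv ℝ (h j k) p (Pi.single l 1)
        - h j l p * fderiv ℝ (h i k) p (Pi.single l 1)) = 0) ∧
    (∀ p : Fin 4 → ℝ,
      fderiv ℝ Y p (Pi.single 3 1) = -X p + Pi.single 2 1 ∧
      fderiv ℝ Y p (Pi.single 3 1) ∉ Submodule.span ℝ {X p, Y p}) := by
  intro X Y h
  have hXeq : X = Xf := rfl
  have hYeq : Y = Yf := rfl
  have hheq : ∀ i j : Fin 4, h i j = fun p => Xf p i * Yf p j + Yf p i * Xf p j :=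
    fun _ _ => rfl
  refine ⟨?_, ?_, ?_⟩
  · intro p
    rw [hXeq, hYeq, fX, fY]
    refine ⟨?_, ?_, ?_, ?_⟩
    · rw [LX_apply]; funext i; rw [X3]; simp
    · rw [LY_apply]; funext i; rw [X3]; simp
    · rw [LX_apply]; funext i; rw [Y3]; simp
    · rw [LY_apply]; funext i; rw [Y3]; simp
  · intro i j k p
    have hzero : ∀ a b : Fin 4, h a b p = Xf p a * Yf p b + Yf p a * Xf p b := fun _ _ => rfl
    have h3 : ∀ a : Fin 4, h a 3 p = 0 := by
      intro a; rw [hzero, X3, Y3]; ring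
    have hfd : ∀ (a b : Fin 4) (l : Fin 4), l ≠ 3 →
        fderiv ℝ (h a b) p (Pi.single l 1) = 0 := by
      intro a b l hl
      rw [hheq, fH]
      rw [Pi.single_eq_of_ne (Ne.symm hl)]
      ring
    rw [Fin.sum_univ_four]
    rw [hfd i k 0 (by decide), hfd j k 0 (by decide), hfd i k 1 (by decide),
      hfd j k 1 (by decide), hfd i k 2 (by decide), hfd j k 2 (by decide), h3 i, h3 j]
    ring
  · intro p
    have hd : fderiv ℝ Y p (Pi.single 3 1) = cY p := by
      rw [hYeq, fY, LY_apply]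
      funext i
      simp
    constructor
    · rw [hd, hXeq]
      funext i
      fin_cases i <;> simp [cY, Xf, Pi.single_apply]
    · rw [hd]
      intro hmem
      rw [Submodule.mem_span_pair] at hmem
      obtain ⟨a, b, hab⟩ := hmem
      have h0 := congrFun hab 0
      have h1 := congrFun hab 1
      have h2 := congrFun hab 2
      rw [hXeq, hYeq] at h0 h1 h2
      simp [Xf, Yf, cY] at h0 h1 h2
      have hs := Real.sin_sq_add_cos_sq (p 3)
      have hc : Real.cos (p 3) = b * Real.sin (p 3) := by
        rw [h2] at h0; linarith
      have hsn : Real.sin (p 3) = -(b * Real.cos (p 3)) := by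
        rw [h2] at h1; linarith
      have e1 := congrArg (fun x => x * Real.cos (p 3)) hc
      have e2 := congrArg (fun x => x * Real.sin (p 3)) hsn
      nlinarith [hs, e1, e2]
end
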